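/- Let q be a prime power, n coprime to q, and P a μ_q-invariant subset of Z/nZ. Let C_P be the cyclic code in F_q[X]/⟨X^n−1⟩ with check polynomial f_P(X) = ∏_{i∈P}(X−θ^i), and let φ_{s,t} be the isometry a(X) ↦ a(θ^{−t}X^{s^{-1}}) mod X^n−1. Then φ_{s,t}(C_P) = C_{ρ_{s,t}(P)}. -/

import Mathlib

open Polynomial

/-- `f_P(X) = ∏_{i∈P} (X − θ^i)` for a subset `P ⊆ ℤ/nℤ`. -/
noncomputable def fPoly {E : Type*} [Field E] {n : ℕ} (θ : E) (P : Finset (ZMod n)) : E[X] :=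
  ∏ i ∈ P, (X - C (θ ^ i.val))

/-- The cyclic code in `F[X]/⟨X^n−1⟩` with check polynomial `h`: the ideal
`{c : c·h = 0 in F[X]/⟨X^n−1⟩}` (for `h` a divisor of `X^n−1`, this is the
ideal generated by `(X^n−1)/h`). -/
noncomputable def cyclicCode (F : Type*) [Field F] (n : ℕ) (h : F[X]) :
    Submodule F (AdjoinRoot (X ^ n - 1 : F[X])) :=
  LinearMap.ker (LinearMap.mulRight F (AdjoinRoot.mk (X ^ n - 1 : F[X]) h))

/-! The automorphism `φ` carries the annihilator of `f_P` to the annihilator of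
`A = f_P(θ^{-t} X^{s'})`. Over `E`, `X^n - 1 = ∏_j (X - θ^j)` has simple roots, so the
annihilator of a polynomial modulo `X^n - 1` only depends on which `θ^j` it vanishes at; and
`A(θ^j) = 0` iff `θ^{j s' - t} = θ^i` for some `i ∈ P`, i.e. iff `j ∈ ρ_{s,t}(P)`. Hence `A` and
`f_{ρ(P)}` have the same annihilator over `E`, and so over `F`, since divisibility in `F[X]` does
not change under extension of scalars. -/

namespace IsPrimitiveRoot

variable {E : Type*} [Field E] {n : ℕ} [NeZero n] {θ : E}

theorem pow_eq_pow_iff_natCast_eq (hθ : IsPrimitiveRoot θ n) {a b : ℕ} :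
    θ ^ a = θ ^ b ↔ (a : ZMod n) = b := by
  rw [ZMod.natCast_eq_natCast_iff, hθ.eq_orderOf]
  exact (hθ.isOfFinOrder (NeZero.ne n)).pow_eq_pow_iff_modEq

theorem pow_val_injective (hθ : IsPrimitiveRoot θ n) :
    Function.Injective fun i : ZMod n => θ ^ i.val := fun i j h => by
  simpa using hθ.pow_eq_pow_iff_natCast_eq.mp h

end IsPrimitiveRoot

section fPoly

variable {E : Type*} [Field E] {n : ℕ} [NeZero n] {θ : E}

theorem fPoly_univ (hθ : IsPrimitiveRoot θ n) :
    fPoly θ (Finset.univ : Finset (ZMod n)) = X ^ n - 1 := by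
  rw [← C_1, X_pow_sub_C_eq_prod hθ (Nat.pos_of_neZero n) (one_pow n), fPoly]
  refine Finset.prod_nbij' ZMod.val (↑) (fun i _ => Finset.mem_range.mpr i.val_lt)
    (fun _ _ => Finset.mem_univ _) (fun i _ => ZMod.natCast_zmod_val i)
    (fun k hk => ZMod.val_cast_of_lt (Finset.mem_range.mp hk)) (fun i _ => by rw [mul_one])

theorem fPoly_mul_fPoly_compl (hθ : IsPrimitiveRoot θ n) (S : Finset (ZMod n)) :
    fPoly θ S * fPoly θ Sᶜ = X ^ n - 1 := by
  rw [fPoly, fPoly, Finset.prod_mul_prod_compl, ← fPoly, fPoly_univ hθ]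

theorem fPoly_dvd_of_isRoot (hθ : IsPrimitiveRoot θ n) {S : Finset (ZMod n)} {A : E[X]}
    (hA : ∀ j ∈ S, A.IsRoot (θ ^ j.val)) : fPoly θ S ∣ A :=
  Finset.prod_dvd_of_coprime
    (fun _ _ _ _ hij => pairwise_coprime_X_sub_C hθ.pow_val_injective hij)
    fun j hj => dvd_iff_isRoot.mpr (hA j hj)

omit [NeZero n] in
theorem isCoprime_fPoly_of_not_isRoot {S : Finset (ZMod n)} {A : E[X]}
    (hA : ∀ j ∈ S, ¬A.IsRoot (θ ^ j.val)) : IsCoprime (fPoly θ S) A :=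
  IsCoprime.prod_left fun j hj =>
    (irreducible_X_sub_C _).coprime_iff_not_dvd.mpr fun hdvd => hA j hj (dvd_iff_isRoot.mp hdvd)

theorem X_pow_sub_one_dvd_mul_iff (hθ : IsPrimitiveRoot θ n) {A : E[X]} {S : Finset (ZMod n)}
    (hA : ∀ j, A.IsRoot (θ ^ j.val) ↔ j ∈ S) (h : E[X]) :
    X ^ n - 1 ∣ h * A ↔ X ^ n - 1 ∣ h * fPoly θ S := by
  rw [← fPoly_mul_fPoly_compl hθ S]
  constructor
  · intro hd
    have hcop : IsCoprime (fPoly θ Sᶜ) A := isCoprime_fPoly_of_not_isRoot fun j hj hroot =>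
      Finset.mem_compl.mp hj ((hA j).mp hroot)
    have : fPoly θ Sᶜ ∣ h := hcop.dvd_of_dvd_mul_right (dvd_of_mul_left_dvd hd)
    rw [mul_comm h]
    exact mul_dvd_mul_left _ this
  · intro hd
    exact hd.trans (mul_dvd_mul_left h (fPoly_dvd_of_isRoot hθ fun j hj => (hA j).mpr hj))

theorem isRoot_fPoly_comp_iff (hθ : IsPrimitiveRoot θ n) (P : Finset (ZMod n)) {s s' t : ℕ}
    (hss' : (s : ZMod n) * s' = 1) (j : ZMod n) :
    ((fPoly θ P).comp (C (θ ^ t)⁻¹ * X ^ s')).IsRoot (θ ^ j.val) ↔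
      j ∈ P.image fun i => (s : ZMod n) * (i + t) := by
  have hθt : θ ^ t ≠ 0 := pow_ne_zero _ (hθ.ne_zero (NeZero.ne n))
  have key (i : ZMod n) :
      (θ ^ t)⁻¹ * (θ ^ j.val) ^ s' = θ ^ i.val ↔ (s : ZMod n) * (i + t) = j := by
    rw [inv_mul_eq_iff_eq_mul₀ hθt, ← pow_mul, ← pow_add, hθ.pow_eq_pow_iff_natCast_eq]
    push_cast
    rw [ZMod.natCast_zmod_val, ZMod.natCast_zmod_val]
    constructor <;> intro h
    · linear_combination j * hss' - (s : ZMod n) * h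
    · linear_combination (i + t) * hss' - (s' : ZMod n) * h
  simp only [fPoly, IsRoot, eval_comp, eval_prod, Finset.prod_eq_zero_iff, eval_sub, eval_X,
    eval_C, eval_mul, eval_pow, sub_eq_zero, key, Finset.mem_image]

end fPoly

section CyclicCode

variable {F : Type*} [Field F] {n : ℕ}

theorem mk_mem_cyclicCode_iff (h c : F[X]) :
    AdjoinRoot.mk (X ^ n - 1) c ∈ cyclicCode F n h ↔ X ^ n - 1 ∣ c * h := by
  rw [cyclicCode, LinearMap.mem_ker, LinearMap.mulRight_apply, ← map_mul, AdjoinRoot.mk_eq_zero]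

theorem cyclicCode_eq_of_dvd_iff {f g : F[X]}
    (hfg : ∀ c, X ^ n - 1 ∣ c * f ↔ X ^ n - 1 ∣ c * g) :
    cyclicCode F n f = cyclicCode F n g := by
  ext x
  obtain ⟨c, rfl⟩ := AdjoinRoot.mk_surjective x
  rw [mk_mem_cyclicCode_iff, mk_mem_cyclicCode_iff, hfg]

theorem image_cyclicCode
    (φ : AdjoinRoot (X ^ n - 1 : F[X]) ≃ₐ[F] AdjoinRoot (X ^ n - 1 : F[X]))
    {f g : F[X]} (hφ : φ (AdjoinRoot.mk _ f) = AdjoinRoot.mk _ g) :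
    φ '' (cyclicCode F n f : Set (AdjoinRoot (X ^ n - 1 : F[X]))) = cyclicCode F n g := by
  ext x
  simp only [Set.mem_image, SetLike.mem_coe, cyclicCode, LinearMap.mem_ker,
    LinearMap.mulRight_apply]
  constructor
  · rintro ⟨y, hy, rfl⟩
    rw [← hφ, ← map_mul, hy, map_zero]
  · intro hx
    refine ⟨φ.symm x, φ.injective ?_, φ.apply_symm_apply x⟩
    rw [map_mul, φ.apply_symm_apply, hφ, hx, map_zero]

end CyclicCode

theorem stmt8 (F : Type*) [Field F] (n : ℕ) (hn : 0 < n)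
    (E : Type*) [Field E] [Algebra F E] (θ : E) (hθ : IsPrimitiveRoot θ n)
    (s s' t : ℕ) (hs' : s * s' ≡ 1 [MOD n])
    (P : Finset (ZMod n))
    (fPF gF : F[X])
    (hfPF : fPF.map (algebraMap F E) = fPoly θ P)
    (hgF : gF.map (algebraMap F E) =
      fPoly θ (P.image fun i => (s : ZMod n) * (i + (t : ZMod n))))
    (b : F) (hb : algebraMap F E b = (θ ^ t)⁻¹)
    (φ : AdjoinRoot (X ^ n - 1 : F[X]) ≃ₐ[F] AdjoinRoot (X ^ n - 1 : F[X]))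
    (hφ : ∀ a : F[X], φ (AdjoinRoot.mk _ a) = AdjoinRoot.mk _ (a.comp (C b * X ^ s'))) :
    φ '' (cyclicCode F n fPF : Set (AdjoinRoot (X ^ n - 1 : F[X]))) =
      (cyclicCode F n gF : Set (AdjoinRoot (X ^ n - 1 : F[X]))) := by
  have : NeZero n := ⟨hn.ne'⟩
  have hss' : (s : ZMod n) * s' = 1 := by
    exact_mod_cast (ZMod.natCast_eq_natCast_iff _ _ _).mpr hs'
  have hmap : (fPF.comp (C b * X ^ s')).map (algebraMap F E) =
      (fPoly θ P).comp (C (θ ^ t)⁻¹ * X ^ s') := by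
    simp [Polynomial.map_comp, hfPF, hb]
  rw [image_cyclicCode φ (hφ fPF), cyclicCode_eq_of_dvd_iff fun c => ?_]
  rw [← map_dvd_map' (algebraMap F E), ← map_dvd_map' (algebraMap F E) (x := X ^ n - 1)]
  simp only [Polynomial.map_mul, Polynomial.map_sub, Polynomial.map_pow, map_X,
    Polynomial.map_one, hmap, hgF]
  exact X_pow_sub_one_dvd_mul_iff hθ (isRoot_fPoly_comp_iff hθ P hss') _
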